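/- Let (Ω, Σ, μ) be a measure space, f, g, h ∈ L²(Ω, 𝕜) (𝕜 = ℝ or ℂ) with ∫_Ω |h(s)|² dμ(s) = 1, γ, Γ ∈ 𝕜, and λ ∈ (0,1). If ∫_Ω Re{[Γh(s) − (λf(s) + (1−λ)g(s))]·[λ·conj(f(s)) + (1−λ)·conj(g(s)) − conj(γ)·conj(h(s))]} dμ(s) ≥ 0, then ∫_Ω Re[f(s)conj(g(s))] dμ − Re[∫_Ω f(s)conj(h(s)) dμ · ∫_Ω h(s)conj(g(s)) dμ] ≤ (1/16)·(1/(λ(1−λ)))·|Γ − γ|². -/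

import Mathlib

/-!
In `L²(μ)` the left-hand side is `re ⟪P g, P f⟫`, where `P x = x - ⟪h, x⟫ h` is the orthogonal
projection onto `h^⊥`. By polarization, `λ(1-λ) re ⟪P g, P f⟫ ≤ ‖P u‖² / 4` for
`u = λ f + (1-λ) g`, and the hypothesis says that `u` lies in the closed ball of radius
`|Γ - γ| / 2` about `(γ + Γ)/2 · h`, so `‖P u‖ ≤ |Γ - γ| / 2`.
-/

open MeasureTheory RCLike ComplexConjugate
open scoped InnerProductSpace

section InnerProductSpace

variable {𝕜 E : Type*} [RCLike 𝕜] [NormedAddCommGroup E] [InnerProductSpace 𝕜 E]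

theorem re_inner_le_norm_add_sq_div_four (x y : E) : re ⟪x, y⟫_𝕜 ≤ ‖x + y‖ ^ 2 / 4 := by
  rw [re_inner_eq_norm_add_mul_self_sub_norm_sub_mul_self_div_four]
  nlinarith [mul_self_nonneg ‖x - y‖]

theorem norm_sub_inv_two_smul_add_le_of_re_inner_nonneg {a b x : E}
    (h : 0 ≤ re ⟪x - a, b - x⟫_𝕜) : ‖x - (2⁻¹ : 𝕜) • (a + b)‖ ≤ ‖b - a‖ / 2 := by
  have hsum : (x - a) + (b - x) = b - a := by abel
  have hdiff : (x - a) - (b - x) = (2 : 𝕜) • (x - (2⁻¹ : 𝕜) • (a + b)) := by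
    module
  rw [re_inner_eq_norm_add_mul_self_sub_norm_sub_mul_self_div_four, hsum, hdiff, norm_smul,
    RCLike.norm_two] at h
  nlinarith [norm_nonneg (x - (2⁻¹ : 𝕜) • (a + b)), norm_nonneg (b - a)]

variable {H : E}

theorem inner_sub_inner_smul_sub_inner_smul (hH : ‖H‖ = 1) (x y : E) :
    ⟪x - ⟪H, x⟫_𝕜 • H, y - ⟪H, y⟫_𝕜 • H⟫_𝕜 = ⟪x, y⟫_𝕜 - ⟪x, H⟫_𝕜 * ⟪H, y⟫_𝕜 := by
  have hHH : ⟪H, H⟫_𝕜 = 1 := by simp [inner_self_eq_norm_sq_to_K, hH]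
  simp only [inner_sub_left, inner_sub_right, inner_smul_left, inner_smul_right, hHH,
    inner_conj_symm]
  ring

theorem norm_sub_inner_smul_le (hH : ‖H‖ = 1) (x : E) (c : 𝕜) :
    ‖x - ⟪H, x⟫_𝕜 • H‖ ≤ ‖x - c • H‖ := by
  have horth : ⟪x - ⟪H, x⟫_𝕜 • H, (⟪H, x⟫_𝕜 - c) • H⟫_𝕜 = 0 := by
    simp [inner_sub_left, inner_smul_left, inner_smul_right, inner_self_eq_norm_sq_to_K, hH]
  have hsplit : x - c • H = (x - ⟪H, x⟫_𝕜 • H) + (⟪H, x⟫_𝕜 - c) • H := by module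
  rw [hsplit]
  refine (mul_self_le_mul_self_iff (norm_nonneg _) (norm_nonneg _)).2 ?_
  rw [norm_add_sq_eq_norm_sq_add_norm_sq_of_inner_eq_zero _ _ horth]
  exact le_add_of_nonneg_right (mul_self_nonneg _)

theorem norm_sub_inner_smul_le_of_re_inner_nonneg (hH : ‖H‖ = 1) {x : E} {γ Γ : 𝕜}
    (h : 0 ≤ re ⟪x - γ • H, Γ • H - x⟫_𝕜) : ‖x - ⟪H, x⟫_𝕜 • H‖ ≤ ‖Γ - γ‖ / 2 :=
  calc ‖x - ⟪H, x⟫_𝕜 • H‖ ≤ ‖x - (2⁻¹ * (γ + Γ)) • H‖ := norm_sub_inner_smul_le hH x _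
    _ = ‖x - (2⁻¹ : 𝕜) • (γ • H + Γ • H)‖ := by rw [← add_smul, smul_smul]
    _ ≤ ‖Γ • H - γ • H‖ / 2 := norm_sub_inv_two_smul_add_le_of_re_inner_nonneg h
    _ = ‖Γ - γ‖ / 2 := by rw [← sub_smul, norm_smul, hH, mul_one]

theorem re_inner_sub_inner_mul_inner_le_of_re_inner_nonneg (hH : ‖H‖ = 1) {F G : E}
    {γ Γ : 𝕜} {l : ℝ} (hl : l ∈ Set.Ioo (0 : ℝ) 1)
    (h : 0 ≤ re ⟪(l : 𝕜) • F + ((1 - l : ℝ) : 𝕜) • G - γ • H,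
      Γ • H - ((l : 𝕜) • F + ((1 - l : ℝ) : 𝕜) • G)⟫_𝕜) :
    re ⟪G, F⟫_𝕜 - re (⟪H, F⟫_𝕜 * ⟪G, H⟫_𝕜) ≤ 1 / 16 * (1 / (l * (1 - l))) * ‖Γ - γ‖ ^ 2 := by
  obtain ⟨hl0, hl1⟩ := hl
  set P : E → E := fun x ↦ x - ⟪H, x⟫_𝕜 • H
  have hP : ((1 - l : ℝ) : 𝕜) • P G + (l : 𝕜) • P F =
      P ((l : 𝕜) • F + ((1 - l : ℝ) : 𝕜) • G) := by
    simp only [P, inner_add_right, inner_smul_right]; module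
  have hD : re ⟪G, F⟫_𝕜 - re (⟪H, F⟫_𝕜 * ⟪G, H⟫_𝕜) = re ⟪P G, P F⟫_𝕜 := by
    rw [inner_sub_inner_smul_sub_inner_smul hH, map_sub, mul_comm]
  have hpolar : l * (1 - l) * re ⟪P G, P F⟫_𝕜 ≤
      ‖P ((l : 𝕜) • F + ((1 - l : ℝ) : 𝕜) • G)‖ ^ 2 / 4 := by
    have := re_inner_le_norm_add_sq_div_four (𝕜 := 𝕜) (((1 - l : ℝ) : 𝕜) • P G) ((l : 𝕜) • P F)
    rwa [hP, inner_smul_left, inner_smul_right, conj_ofReal, ← mul_assoc, ← ofReal_mul,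
      re_ofReal_mul, mul_comm (1 - l)] at this
  have hGruss := norm_sub_inner_smul_le_of_re_inner_nonneg hH h
  have hll : 0 < l * (1 - l) := mul_pos hl0 (by linarith)
  have hsq := pow_le_pow_left₀ (norm_nonneg _) hGruss 2
  rw [hD, show 1 / 16 * (1 / (l * (1 - l))) * ‖Γ - γ‖ ^ 2 = ‖Γ - γ‖ ^ 2 / 16 / (l * (1 - l)) by
    field_simp, le_div_iff₀ hll]
  linarith

end InnerProductSpace

namespace MeasureTheory.MemLp

variable {Ω 𝕜 : Type*} [MeasurableSpace Ω] [RCLike 𝕜] {μ : Measure Ω} {u v : Ω → 𝕜}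

theorem inner_toLp_ae_eq (hu : MemLp u 2 μ) (hv : MemLp v 2 μ) :
    (fun s ↦ ⟪hu.toLp u s, hv.toLp v s⟫_𝕜) =ᵐ[μ] fun s ↦ v s * conj (u s) := by
  filter_upwards [hu.coeFn_toLp, hv.coeFn_toLp] with s hus hvs
  rw [hus, hvs, RCLike.inner_apply]

theorem inner_toLp (hu : MemLp u 2 μ) (hv : MemLp v 2 μ) :
    ⟪hu.toLp u, hv.toLp v⟫_𝕜 = ∫ s, v s * conj (u s) ∂μ := by
  rw [L2.inner_def]
  exact integral_congr_ae (hu.inner_toLp_ae_eq hv)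

theorem re_inner_toLp (hu : MemLp u 2 μ) (hv : MemLp v 2 μ) :
    RCLike.re ⟪hu.toLp u, hv.toLp v⟫_𝕜 = ∫ s, RCLike.re (v s * conj (u s)) ∂μ := by
  rw [L2.inner_def, ← integral_re (L2.integrable_inner _ _)]
  exact integral_congr_ae ((hu.inner_toLp_ae_eq hv).mono fun s hs ↦ congrArg RCLike.re hs)

theorem norm_toLp_sq (hu : MemLp u 2 μ) : ‖hu.toLp u‖ ^ 2 = ∫ s, ‖u s‖ ^ 2 ∂μ := by
  rw [← inner_self_eq_norm_sq (𝕜 := 𝕜), re_inner_toLp]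
  simp_rw [RCLike.mul_conj, ← ofReal_pow, ofReal_re]

end MeasureTheory.MemLp

/-- **A companion of the Grüss inequality for integrals** (Proposition 2). -/
theorem gruss_convex_integral {Ω 𝕜 : Type*} [MeasurableSpace Ω] [RCLike 𝕜]
    (μ : Measure Ω) (f g h : Ω → 𝕜)
    (hf : MemLp f 2 μ) (hg : MemLp g 2 μ) (hh : MemLp h 2 μ)
    (hh1 : ∫ s, ‖h s‖ ^ 2 ∂μ = 1)
    (γ Γ : 𝕜) (l : ℝ) (hl : l ∈ Set.Ioo (0 : ℝ) 1)
    (hcond : 0 ≤ ∫ s, RCLike.re ((Γ * h s - ((l : 𝕜) * f s + ((1 - l : ℝ) : 𝕜) * g s)) *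
      ((l : 𝕜) * starRingEnd 𝕜 (f s) + ((1 - l : ℝ) : 𝕜) * starRingEnd 𝕜 (g s) -
        starRingEnd 𝕜 γ * starRingEnd 𝕜 (h s))) ∂μ) :
    (∫ s, RCLike.re (f s * starRingEnd 𝕜 (g s)) ∂μ) -
        RCLike.re ((∫ s, f s * starRingEnd 𝕜 (h s) ∂μ) *
          ∫ s, h s * starRingEnd 𝕜 (g s) ∂μ) ≤
      (1 / 16 : ℝ) * (1 / (l * (1 - l))) * ‖Γ - γ‖ ^ 2 := by
  have hH : ‖hh.toLp h‖ = 1 := by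
    rw [← pow_eq_one_iff_of_nonneg (norm_nonneg _) two_ne_zero, hh.norm_toLp_sq, hh1]
  have hU := (hf.const_smul (l : 𝕜)).add (hg.const_smul ((1 - l : ℝ) : 𝕜))
  -- `MemLp.toLp` of a linear combination is definitionally the same combination in `Lp`.
  have hcondL2 := MemLp.re_inner_toLp (hU.sub (hh.const_smul γ)) ((hh.const_smul Γ).sub hU)
  have key := re_inner_sub_inner_mul_inner_le_of_re_inner_nonneg hH (F := hf.toLp f)
    (G := hg.toLp g) hl (hcond.trans_eq (Eq.trans ?_ hcondL2.symm))
  · rwa [hg.re_inner_toLp hf, hh.inner_toLp hf, hg.inner_toLp hh] at key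
  · simp only [Pi.add_apply, Pi.sub_apply, Pi.smul_apply, smul_eq_mul, map_sub, map_add, map_mul,
      conj_ofReal]
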